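/- Let A be a skew-symmetric payoff matrix on Fin N whose pure strategies are partitioned into a nonempty set Π_eq and its complement Π_out, and suppose there is r > 0 such that A i ρ ≥ r for every i ∈ Π_eq and ρ ∈ Π_out, while |A i j| < r for all i, j ∈ Π_eq. Assume nondegeneracy: for every nonempty E ⊆ Π_eq, the zero-sum matrix game in which the row player mixes over E and the column player mixes over Π_eq (row payoff given by A) has a unique pair of optimal mixed strategies. If P ⊆ Fin N is a nonempty population with P ∩ Π_eq ≠ ∅, then for every ρ ∈ Π_out we have PE(P ∪ {ρ}) = PE(P). -/

import Mathlib

/-- Payoff of pure strategy `i` against mixed strategy `σ`: `(Aσ) i = ∑ j, A i j * σ j`. -/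
noncomputable def pay {N : ℕ} (A : Fin N → Fin N → ℝ) (σ : Fin N → ℝ) (i : Fin N) : ℝ :=
  ∑ j, A i j * σ j

/-- `max_i (Aσ) i`. -/
noncomputable def maxPay {N : ℕ} (A : Fin N → Fin N → ℝ) (σ : Fin N → ℝ) : ℝ :=
  ⨆ i, pay A σ i

/-- `σ` is a mixed strategy supported inside `P`. -/
def SuppIn {N : ℕ} (P : Set (Fin N)) (σ : Fin N → ℝ) : Prop :=
  σ ∈ stdSimplex ℝ (Fin N) ∧ ∀ j ∉ P, σ j = 0

/-- Population exploitability of a population `P`: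
the least value of `max_i (Aσ) i` over mixed strategies supported in `P`. -/
noncomputable def PE {N : ℕ} (A : Fin N → Fin N → ℝ) (P : Set (Fin N)) : ℝ :=
  sInf (maxPay A '' {σ | SuppIn P σ})

/-- `i` is a best response to `σ`. -/
def IsBR {N : ℕ} (A : Fin N → Fin N → ℝ) (σ : Fin N → ℝ) (i : Fin N) : Prop :=
  pay A σ i = maxPay A σ

/-- Guaranteed payoff of a row mixture `x` against the column strategy set `C`:
`min_{j ∈ C} ∑ i, x i * A i j`. -/
noncomputable def rowGuarantee {N : ℕ} (A : Fin N → Fin N → ℝ) (C : Set (Fin N))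
    (x : Fin N → ℝ) : ℝ :=
  sInf {v | ∃ j ∈ C, v = ∑ i, x i * A i j}

/-- Threat value of a column mixture `y` against the row strategy set `R`:
`max_{i ∈ R} ∑ j, A i j * y j`. -/
noncomputable def colThreat {N : ℕ} (A : Fin N → Fin N → ℝ) (R : Set (Fin N))
    (y : Fin N → ℝ) : ℝ :=
  sSup {v | ∃ i ∈ R, v = ∑ j, A i j * y j}

/-- `(x, y)` is an optimal pair of the zero-sum matrix game with row strategy set `R`,
column strategy set `C` and row payoff `A`: `x` is a maximin row mixture and `y` a
minimax column mixture. -/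
def OptimalPair {N : ℕ} (A : Fin N → Fin N → ℝ) (R C : Set (Fin N))
    (x y : Fin N → ℝ) : Prop :=
  SuppIn R x ∧ SuppIn C y ∧
  (∀ x', SuppIn R x' → rowGuarantee A C x' ≤ rowGuarantee A C x) ∧
  (∀ y', SuppIn C y' → colThreat A R y ≤ colThreat A R y')

/-!
Let `E = P ∩ Π_eq`. Since `PE` is antitone in the population, it suffices to show
`PE(E) ≤ max_i (Aσ) i` for every `σ` supported in `P ∪ {ρ}`. Split `σ = s + t` into its parts on
`Π_eq` and outside it, and let `m = ∑ s`. Against a mixture supported in `Π_eq`, every row outside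
`Π_eq` is strictly dominated by any row of `Π_eq`, so the normalised `s / m` (supported in `E`)
already has a best response `i ∈ Π_eq`, giving `(As) i ≥ m · PE(E)`. Every row of `Π_eq` earns at
least `r` against each outside strategy, so `(At) i ≥ (1 - m) r`, and `PE(E) ≤ r` because a pure
strategy of `Π_eq` concedes less than `r` to every row. Hence
`(Aσ) i ≥ m · PE(E) + (1 - m) r ≥ PE(E)`.
-/

open Finset

section General

variable {N : ℕ} (A : Fin N → Fin N → ℝ)

lemma pay_le_maxPay (σ : Fin N → ℝ) (i : Fin N) : pay A σ i ≤ maxPay A σ :=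
  le_ciSup (Set.finite_range (pay A σ)).bddAbove i

lemma pay_add (σ τ : Fin N → ℝ) (i : Fin N) : pay A (σ + τ) i = pay A σ i + pay A τ i := by
  simp only [pay, Pi.add_apply, mul_add, sum_add_distrib]

lemma pay_smul (c : ℝ) (σ : Fin N → ℝ) (i : Fin N) : pay A (c • σ) i = c * pay A σ i := by
  simp only [pay, Pi.smul_apply, smul_eq_mul, mul_sum]
  exact sum_congr rfl fun _ _ => by ring

lemma pay_single (i j : Fin N) : pay A (Pi.single j 1) i = A i j := by
  simp [pay, Pi.single_apply]

lemma pay_le_pay_of_le_on {S : Set (Fin N)} {σ : Fin N → ℝ} (hσ : SuppIn S σ) {i k : Fin N}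
    (h : ∀ j ∈ S, A i j ≤ A k j) : pay A σ i ≤ pay A σ k := by
  refine sum_le_sum fun j _ => ?_
  by_cases hj : j ∈ S
  · exact mul_le_mul_of_nonneg_right (h j hj) (hσ.1.1 j)
  · simp [hσ.2 j hj]

/-- The `σ`-average of `pay A σ` is `σᵀAσ = 0` by skew-symmetry. -/
lemma maxPay_nonneg (hA : ∀ i j, A j i = -A i j) {σ : Fin N → ℝ}
    (hσ : σ ∈ stdSimplex ℝ (Fin N)) : 0 ≤ maxPay A σ := by
  have hquad : ∑ i, σ i * pay A σ i = 0 := by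
    have hswap : ∑ i, ∑ j, σ i * (A i j * σ j) = -∑ i, ∑ j, σ i * (A i j * σ j) := by
      conv_lhs => rw [sum_comm]
      rw [← sum_neg_distrib]
      refine sum_congr rfl fun j _ => ?_
      rw [← sum_neg_distrib]
      exact sum_congr rfl fun i _ => by rw [hA i j]; ring
    simp only [pay, mul_sum]
    linarith
  calc (0 : ℝ) = ∑ i, σ i * pay A σ i := hquad.symm
    _ ≤ ∑ i, σ i * maxPay A σ :=
      sum_le_sum fun i _ => mul_le_mul_of_nonneg_left (pay_le_maxPay A σ i) (hσ.1 i)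
    _ = maxPay A σ := by rw [← sum_mul, hσ.2, one_mul]

lemma SuppIn.mono {P Q : Set (Fin N)} {σ : Fin N → ℝ} (hσ : SuppIn P σ) (hPQ : P ⊆ Q) :
    SuppIn Q σ :=
  ⟨hσ.1, fun j hj => hσ.2 j fun hjP => hj (hPQ hjP)⟩

lemma suppIn_single {P : Set (Fin N)} {j : Fin N} (hj : j ∈ P) : SuppIn P (Pi.single j 1) :=
  ⟨single_mem_stdSimplex ℝ j, fun k hk => Pi.single_eq_of_ne (by rintro rfl; exact hk hj) 1⟩

variable {A}

lemma PE_le_maxPay (hA : ∀ i j, A j i = -A i j) {P : Set (Fin N)} {σ : Fin N → ℝ}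
    (hσ : SuppIn P σ) : PE A P ≤ maxPay A σ :=
  csInf_le ⟨0, by rintro _ ⟨τ, hτ, rfl⟩; exact maxPay_nonneg A hA hτ.1⟩ ⟨σ, hσ, rfl⟩

lemma le_PE {P : Set (Fin N)} (hP : P.Nonempty) {c : ℝ}
    (h : ∀ σ, SuppIn P σ → c ≤ maxPay A σ) : c ≤ PE A P := by
  obtain ⟨j, hj⟩ := hP
  refine le_csInf ⟨_, _, suppIn_single hj, rfl⟩ ?_
  rintro _ ⟨σ, hσ, rfl⟩
  exact h σ hσ

lemma PE_anti (hA : ∀ i j, A j i = -A i j) {P Q : Set (Fin N)} (hPQ : P ⊆ Q)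
    (hP : P.Nonempty) : PE A Q ≤ PE A P :=
  le_PE hP fun _ hσ => PE_le_maxPay hA (hσ.mono hPQ)

end General

section Margin

variable {N : ℕ} {A : Fin N → Fin N → ℝ} (hA : ∀ i j, A j i = -A i j) {Peq : Set (Fin N)}
  {r : ℝ} (hout : ∀ i ∈ Peq, ∀ ρ ∉ Peq, r ≤ A i ρ) (hin : ∀ i ∈ Peq, ∀ j ∈ Peq, |A i j| < r)
include hA hout hin

lemma maxPay_single_le {j : Fin N} (hj : j ∈ Peq) : maxPay A (Pi.single j 1) ≤ r := by
  have : Nonempty (Fin N) := ⟨j⟩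
  refine ciSup_le fun i => ?_
  rw [pay_single]
  by_cases hi : i ∈ Peq
  · exact (le_abs_self _).trans (hin i hi j hj).le
  · have hr : 0 < r := (abs_nonneg _).trans_lt (hin j hj j hj)
    linarith [hA j i, hout j hj i hi]

lemma exists_mem_maxPay_le_pay {i₀ : Fin N} (hi₀ : i₀ ∈ Peq) {σ : Fin N → ℝ}
    (hσ : SuppIn Peq σ) : ∃ i ∈ Peq, maxPay A σ ≤ pay A σ i := by
  have : Nonempty (Fin N) := ⟨i₀⟩
  obtain ⟨i, hi⟩ := Finite.exists_max (pay A σ)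
  have hmax : maxPay A σ ≤ pay A σ i := ciSup_le hi
  by_cases hiP : i ∈ Peq
  · exact ⟨i, hiP, hmax⟩
  · refine ⟨i₀, hi₀, hmax.trans (pay_le_pay_of_le_on A hσ fun j hj => ?_)⟩
    linarith [hA j i, hout j hj i hiP, neg_lt_of_abs_lt (hin i₀ hi₀ j hj)]

omit hA hin in
lemma mul_sum_le_pay_of_eq_zero_on {i : Fin N} (hi : i ∈ Peq) {t : Fin N → ℝ} (ht : 0 ≤ t)
    (htP : ∀ j ∈ Peq, t j = 0) : r * ∑ j, t j ≤ pay A t i := by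
  rw [mul_sum]
  refine sum_le_sum fun j _ => ?_
  by_cases hj : j ∈ Peq
  · simp [htP j hj]
  · exact mul_le_mul_of_nonneg_right (hout i hi j hj) (ht j)

lemma exists_mem_sum_mul_PE_le_pay {E : Set (Fin N)} (hE : E.Nonempty) (hEP : E ⊆ Peq)
    {s : Fin N → ℝ} (hs : 0 ≤ s) (hsE : ∀ j ∉ E, s j = 0) :
    ∃ i ∈ Peq, (∑ j, s j) * PE A E ≤ pay A s i := by
  obtain ⟨j₀, hj₀⟩ := hE
  rcases (sum_nonneg fun j _ => hs j).eq_or_lt with hm | hm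
  · have hs0 : s = 0 := funext fun j =>
      (sum_eq_zero_iff_of_nonneg fun j _ => hs j).mp hm.symm j (mem_univ j)
    exact ⟨j₀, hEP hj₀, by simp [hs0, pay]⟩
  · have hτ : SuppIn E ((∑ j, s j)⁻¹ • s) := by
      refine ⟨⟨fun j => mul_nonneg (inv_nonneg.mpr hm.le) (hs j), ?_⟩, fun j hj => ?_⟩
      · simp only [Pi.smul_apply, smul_eq_mul, ← mul_sum, inv_mul_cancel₀ hm.ne']
      · simp [hsE j hj]
    obtain ⟨i, hi, hle⟩ := exists_mem_maxPay_le_pay hA hout hin (hEP hj₀) (hτ.mono hEP)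
    have hPE := (PE_le_maxPay hA hτ).trans hle
    rw [pay_smul, le_inv_mul_iff₀ hm] at hPE
    exact ⟨i, hi, hPE⟩

lemma PE_le_maxPay_of_inter_subset {E P : Set (Fin N)} (hE : E.Nonempty) (hEP : E ⊆ Peq)
    (hPE : P ∩ Peq ⊆ E) {σ : Fin N → ℝ} (hσ : SuppIn P σ) : PE A E ≤ maxPay A σ := by
  obtain ⟨j₀, hj₀⟩ := hE
  set s := Peq.indicator σ
  set t := Peqᶜ.indicator σ
  have hs0 : 0 ≤ s := Set.indicator_nonneg fun j _ => hσ.1.1 j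
  have ht0 : 0 ≤ t := Set.indicator_nonneg fun j _ => hσ.1.1 j
  have hst : ∑ j, s j + ∑ j, t j = 1 := by
    rw [← sum_add_distrib, ← hσ.1.2]
    exact sum_congr rfl fun j _ => Set.indicator_self_add_compl_apply Peq σ j
  have hsE : ∀ j ∉ E, s j = 0 := fun j hj => by
    by_cases hjP : j ∈ Peq
    · show Peq.indicator σ j = 0
      rw [Set.indicator_of_mem hjP]
      exact hσ.2 j fun hj' => hj (hPE ⟨hj', hjP⟩)
    · exact Set.indicator_of_notMem hjP σ
  obtain ⟨i, hi, hs⟩ := exists_mem_sum_mul_PE_le_pay hA hout hin ⟨j₀, hj₀⟩ hEP hs0 hsE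
  have ht := mul_sum_le_pay_of_eq_zero_on hout hi ht0
    fun j hj => Set.indicator_of_notMem (Set.notMem_compl_iff.mpr hj) σ
  have hPEr : PE A E ≤ r :=
    (PE_le_maxPay hA (suppIn_single hj₀)).trans (maxPay_single_le hA hout hin (hEP hj₀))
  have htr : (∑ j, t j) * PE A E ≤ r * ∑ j, t j := by
    rw [mul_comm r]
    exact mul_le_mul_of_nonneg_left hPEr (sum_nonneg fun j _ => ht0 j)
  calc PE A E = (∑ j, s j) * PE A E + (∑ j, t j) * PE A E := by rw [← add_mul, hst, one_mul]
    _ ≤ pay A s i + pay A t i := add_le_add hs (htr.trans ht)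
    _ = pay A σ i := by rw [← pay_add, Set.indicator_self_add_compl]
    _ ≤ maxPay A σ := pay_le_maxPay A σ i

end Margin

theorem stmt5_general {N : ℕ} (A : Fin N → Fin N → ℝ) (hA : ∀ i j, A j i = -A i j)
    (Peq : Set (Fin N)) (r : ℝ)
    (hout : ∀ i ∈ Peq, ∀ ρ ∉ Peq, r ≤ A i ρ)
    (hin : ∀ i ∈ Peq, ∀ j ∈ Peq, |A i j| < r)
    (P : Set (Fin N)) (hPeq : (P ∩ Peq).Nonempty) :
    ∀ ρ, ρ ∉ Peq → PE A (P ∪ {ρ}) = PE A P := by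
  intro ρ hρ
  have hP : P.Nonempty := hPeq.mono Set.inter_subset_left
  refine le_antisymm (PE_anti hA Set.subset_union_left hP) ?_
  calc PE A P ≤ PE A (P ∩ Peq) := PE_anti hA Set.inter_subset_left hPeq
    _ ≤ PE A (P ∪ {ρ}) := by
      refine le_PE (hP.mono Set.subset_union_left) fun σ hσ => ?_
      refine PE_le_maxPay_of_inter_subset hA hout hin hPeq Set.inter_subset_right ?_ hσ
      rintro j ⟨hj | rfl, hjP⟩
      · exact ⟨hj, hjP⟩
      · exact absurd hjP hρ

/-- under the `Π_eq`/`Π_out` structure with margin `r` and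
nondegeneracy (each subgame rows `E ⊆ Π_eq` vs. columns `Π_eq` has a unique optimal
pair), adding an outside strategy to a population meeting `Π_eq` leaves PE unchanged. -/
theorem stmt5 {N : ℕ} (A : Fin N → Fin N → ℝ) (hA : ∀ i j, A j i = -A i j)
    (Peq : Set (Fin N)) (hne : Peq.Nonempty) (r : ℝ) (hr : 0 < r)
    (hout : ∀ i ∈ Peq, ∀ ρ ∉ Peq, r ≤ A i ρ)
    (hin : ∀ i ∈ Peq, ∀ j ∈ Peq, |A i j| < r)
    (hnd : ∀ E : Set (Fin N), E.Nonempty → E ⊆ Peq →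
      ∃! p : (Fin N → ℝ) × (Fin N → ℝ), OptimalPair A E Peq p.1 p.2)
    (P : Set (Fin N)) (hP : P.Nonempty) (hPeq : (P ∩ Peq).Nonempty) :
    ∀ ρ, ρ ∉ Peq → PE A (P ∪ {ρ}) = PE A P :=
  stmt5_general A hA Peq r hout hin P hPeq
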